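/- arXiv:1111.2909 — 2 statements merged into one kernel-verified Lean document; each statement's English description precedes it below -/
import Mathlib

section
/- Let $R$ be a commutative ring, $S$ an $R$-algebra which is a domain (or such that relevant determinants are nonzerodivisors), $\Lambda$ a symmetric $(r+1)\times(r+1)$ matrix over $R$, and $G = (1, g_1, \ldots, g_r)$ a vector in $S^{r+1}$ with first entry $1$ such that $\Lambda \cdot G^t = 0$ (entries of $\Lambda$ viewed in $S$). Let $\Lambda^1_1$ be $\Lambda$ with its first row and column deleted, and suppose $\det \Lambda^1_1$ is a nonzerodivisor in $S$. Then the kernel of the map $S^{r+1} \to S^{r+1}$ given by $\Lambda$ is exactly the free rank-one $S$-submodule generated by $G^t$; that is, if $\Lambda \cdot (b_0, \ldots, b_r)^t = 0$ then $b_i = b_0 g_i$ for all $i$. -/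
/-!
Subtracting `b 0 • G` from a kernel vector `b` gives a kernel vector `c` with `c 0 = 0`. For such
a vector the equations of `Λ` in rows `1, …, r` only involve the minor `Λ¹₁` and the tail of `c`,
so the tail of `c` is killed by `Λ¹₁`; as its determinant is a nonzerodivisor, `c = 0`.
-/

open Matrix

namespace Matrix

theorem submatrix_succ_mulVec_tail {α ι : Type*} [NonUnitalNonAssocSemiring α] {n : ℕ}
    (M : Matrix ι (Fin (n + 1)) α) (e : Fin n → ι) {v : Fin (n + 1) → α} (hv : v 0 = 0) :
    M.submatrix e Fin.succ *ᵥ Fin.tail v = (M *ᵥ v) ∘ e := by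
  ext i
  simp [mulVec, dotProduct, Fin.sum_univ_succ (n := n), hv, Fin.tail]

theorem eq_zero_of_mulVec_eq_zero_of_head_eq_zero {α : Type*} [CommRing α] {n : ℕ}
    {M : Matrix (Fin (n + 1)) (Fin (n + 1)) α} (hdet : (M.submatrix Fin.succ Fin.succ).det ∈ nonZeroDivisors α)
    {v : Fin (n + 1) → α} (hv0 : v 0 = 0) (hv : M *ᵥ v = 0) : v = 0 := by
  have htail : Fin.tail v = 0 := by
    refine eq_zero_of_det_mem_nonZeroDivisors_of_mulVec_eq_zero hdet ?_
    rw [submatrix_succ_mulVec_tail M Fin.succ hv0, hv]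
    rfl
  ext i
  cases i using Fin.cases with
  | zero => exact hv0
  | succ j => exact congrFun htail j

end Matrix

theorem ker_of_symmetric_presentation_is_span_G_general
    (R S : Type*) [CommRing R] [CommRing S] [Algebra R S] (r : ℕ)
    (Λ : Matrix (Fin (r + 1)) (Fin (r + 1)) R)
    (G : Fin (r + 1) → S) (hG0 : G 0 = 1)
    (hG : (Λ.map (algebraMap R S)) *ᵥ G = 0)
    (hdet : ((Λ.submatrix Fin.succ Fin.succ).map (algebraMap R S)).det ∈ nonZeroDivisors S) :
    ∀ b : Fin (r + 1) → S, (Λ.map (algebraMap R S)) *ᵥ b = 0 → ∀ i, b i = b 0 * G i := by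
  intro b hb i
  have hker : Λ.map (algebraMap R S) *ᵥ (b - b 0 • G) = 0 := by
    rw [mulVec_sub, mulVec_smul, hb, hG, smul_zero, sub_zero]
  have hhead : (b - b 0 • G) 0 = 0 := by simp [hG0]
  rw [← submatrix_map] at hdet
  have hc := congrFun (eq_zero_of_mulVec_eq_zero_of_head_eq_zero hdet hhead hker) i
  simpa [sub_eq_zero] using hc

/-- Let `Λ` be a symmetric `(r+1) × (r+1)` matrix over `R`, `S` an `R`-algebra, and
`G = (1, g_1, …, g_r) ∈ S^{r+1}` with `Λ · Gᵗ = 0` (entries of `Λ` viewed in `S`).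
If the determinant of the submatrix `Λ¹₁` (delete first row and column) is a
nonzerodivisor in `S`, then the kernel of `Λ : S^{r+1} → S^{r+1}` is exactly the free
rank-one `S`-submodule generated by `Gᵗ`: any `b` with `Λ · b = 0` satisfies
`b_i = b_0 · g_i` for all `i`. -/
theorem ker_of_symmetric_presentation_is_span_G
    (R S : Type*) [CommRing R] [CommRing S] [Algebra R S] (r : ℕ)
    (Λ : Matrix (Fin (r + 1)) (Fin (r + 1)) R) (hΛ : Λ.IsSymm)
    (G : Fin (r + 1) → S) (hG0 : G 0 = 1)
    (hG : (Λ.map (algebraMap R S)) *ᵥ G = 0)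
    (hdet : ((Λ.submatrix Fin.succ Fin.succ).map (algebraMap R S)).det ∈ nonZeroDivisors S) :
    ∀ b : Fin (r + 1) → S, (Λ.map (algebraMap R S)) *ᵥ b = 0 → ∀ i, b i = b 0 * G i :=
  ker_of_symmetric_presentation_is_span_G_general R S r Λ G hG0 hG hdet
end

section
/- Let $R \to A$ be a finite ring homomorphism of commutative Noetherian local rings with $A$ generated as an $R$-module by $1, g_1, \ldots, g_r$. Suppose $0 \to R^{r+1} \xrightarrow{\Lambda} R^{r+1} \xrightarrow{G} A \to 0$ is a free resolution with $\Lambda$ symmetric, $G = (1, g_1, \ldots, g_r)$, and the determinant of the submatrix $\Lambda^1_1$ (obtained by deleting the first row and column) maps to a nonzerodivisor of $A$. Then there is an exact sequence of $A$-modules $0 \to A^{r} \xrightarrow{\Lambda^1_1 \otimes A} A^{r} \to \ker(\mu) \to 0$, where $\mu: A \otimes_R A \to A$ is the multiplication map; i.e., $\Lambda^1_1$ base-changed to $A$ is a presentation matrix of $\ker(\mu)$ with respect to the generators $g_i \otimes 1 - 1 \otimes g_i$. -/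
open Matrix TensorProduct

/-!
Tensoring the resolution with `A` gives a presentation `A^{r+1} --Λ--> A^{r+1} --> A ⊗[R] A --> 0`
sending `e j ↦ 1 ⊗ G j`, under which the generator `g i ⊗ 1 - 1 ⊗ g i` of `ker μ` is minus the image
of the syzygy `e (i + 1) - g i • e 0` of `G = (1, g)`. These syzygies span all syzygies of `G`,
whose image is `ker μ`. Since `G Λ = 0` and `Λ` is symmetric, also `Λ G = 0`, so every
`u = u 0 • G + (0, u')` has `Λ u = Λ (0, u')`, which is the syzygy attached to `Λ¹₁ u'`: a syzygy
lies in the column space of `Λ` exactly when its parameter lies in that of `Λ¹₁`.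
-/

section Syzygy

variable {S : Type*} [CommRing S] {r : ℕ}

def syzygyMap (g : Fin r → S) : (Fin r → S) →ₗ[S] (Fin (r + 1) → S) where
  toFun w := Fin.cons (-(w ⬝ᵥ g)) w
  map_add' v w := by
    ext i
    refine Fin.cases ?_ (fun i => ?_) i <;> simp [add_dotProduct, add_comm]
  map_smul' c w := by
    ext i
    refine Fin.cases ?_ (fun i => ?_) i <;> simp

@[simp]
theorem syzygyMap_apply (g w : Fin r → S) : syzygyMap g w = Fin.cons (-(w ⬝ᵥ g)) w := rfl

theorem syzygyMap_single (g : Fin r → S) (i : Fin r) :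
    syzygyMap g (Pi.single i 1) = Pi.single i.succ 1 - g i • Pi.single 0 1 := by
  ext j
  refine Fin.cases ?_ (fun j => ?_) j <;> simp [Pi.single_apply]

theorem syzygyMap_injective (g : Fin r → S) : Function.Injective (syzygyMap g) :=
  fun v w h => by simpa using congr_arg Fin.tail h

theorem range_syzygyMap (g : Fin r → S) :
    LinearMap.range (syzygyMap g) =
      LinearMap.ker (Fintype.linearCombination S (Fin.cons (1 : S) g)) := by
  ext v
  simp only [LinearMap.mem_range, LinearMap.mem_ker, Fintype.linearCombination_apply,
    Fin.sum_univ_succ, Fin.cons_zero, Fin.cons_succ, smul_eq_mul, mul_one, syzygyMap_apply]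
  constructor
  · rintro ⟨w, rfl⟩
    simp [dotProduct]
  · intro hv
    refine ⟨Fin.tail v, ?_⟩
    rw [← Fin.cons_self_tail v, eq_neg_of_add_eq_zero_left hv]
    rfl

variable {N : Matrix (Fin (r + 1)) (Fin (r + 1)) S} {g : Fin r → S}

theorem mulVec_cons_zero_eq_syzygyMap (hN : Fin.cons 1 g ᵥ* N = 0) (v : Fin r → S) :
    N *ᵥ Fin.cons 0 v = syzygyMap g (N.submatrix Fin.succ Fin.succ *ᵥ v) := by
  have hrow : ∀ j, N 0 j = -∑ i, g i * N i.succ j := fun j => by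
    have := congrFun hN j
    simp only [vecMul, dotProduct, Fin.sum_univ_succ, Fin.cons_zero, Fin.cons_succ, one_mul,
      Pi.zero_apply] at this
    linear_combination this
  ext i
  refine Fin.cases ?_ (fun i => ?_) i
  · simp only [mulVec, dotProduct, Fin.sum_univ_succ, Fin.cons_zero, Fin.cons_succ, mul_zero,
      zero_add, hrow, syzygyMap_apply, submatrix_apply, Finset.sum_mul, neg_mul,
      Finset.sum_neg_distrib, Finset.sum_const_zero]
    rw [Finset.sum_comm]
    exact congrArg _ (Finset.sum_congr rfl fun j _ => Finset.sum_congr rfl fun k _ => by ring)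
  · simp [mulVec, dotProduct, Fin.sum_univ_succ]

theorem comap_syzygyMap_range_mulVecLin (hN : Fin.cons 1 g ᵥ* N = 0)
    (hN' : N *ᵥ Fin.cons 1 g = 0) :
    Submodule.comap (syzygyMap g) (LinearMap.range N.mulVecLin) =
      LinearMap.range (N.submatrix Fin.succ Fin.succ).mulVecLin := by
  ext w
  simp only [Submodule.mem_comap, LinearMap.mem_range, mulVecLin_apply]
  constructor
  · rintro ⟨u, hu⟩
    have hu_decomp : u = u 0 • Fin.cons 1 g + Fin.cons 0 (Fin.tail u - u 0 • g) := by
      ext i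
      refine Fin.cases ?_ (fun i => ?_) i <;> simp [Fin.tail]
    rw [hu_decomp, mulVec_add, mulVec_smul, hN', smul_zero, zero_add,
      mulVec_cons_zero_eq_syzygyMap hN] at hu
    exact ⟨_, syzygyMap_injective g hu⟩
  · rintro ⟨v, rfl⟩
    exact ⟨Fin.cons 0 v, mulVec_cons_zero_eq_syzygyMap hN v⟩

end Syzygy

section BaseChange

variable {R A N ι κ : Type*} [CommRing R] [CommRing A] [Algebra R A] [AddCommGroup N]
  [Module R N] [Fintype ι] [DecidableEq ι] [Fintype κ] [DecidableEq κ]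

theorem Matrix.map_mulVecLin_comp_piScalarRight (M : Matrix κ ι R) :
    (M.map (algebraMap R A)).mulVecLin ∘ₗ (piScalarRight R A A ι).toLinearMap =
      (piScalarRight R A A κ).toLinearMap ∘ₗ M.mulVecLin.baseChange A := by
  ext i k
  simp [mulVec, dotProduct, Pi.single_apply, Algebra.algebraMap_eq_smul_one]

theorem Fintype.linearCombination_one_tmul_comp_piScalarRight (b : κ → N) :
    Fintype.linearCombination A (fun j => (1 : A) ⊗ₜ[R] b j) ∘ₗ
        (piScalarRight R A A κ).toLinearMap =
      (Fintype.linearCombination R b).baseChange A := by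
  ext j
  simp [Fintype.linearCombination_apply, Pi.single_apply, ite_smul]

theorem Fintype.linearCombination_one_tmul_surjective {b : κ → N}
    (hb : Function.Surjective (Fintype.linearCombination R b)) :
    Function.Surjective (Fintype.linearCombination A fun j => (1 : A) ⊗ₜ[R] b j) := by
  have h := LinearMap.lTensor_surjective A hb
  rw [← LinearMap.baseChange_eq_ltensor,
    ← Fintype.linearCombination_one_tmul_comp_piScalarRight, LinearMap.coe_comp] at h
  exact h.of_comp

theorem Matrix.exact_map_mulVecLin_linearCombination_one_tmul (M : Matrix κ ι R) {b : κ → N}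
    (hM : Function.Exact M.mulVecLin (Fintype.linearCombination R b))
    (hb : Function.Surjective (Fintype.linearCombination R b)) :
    Function.Exact (M.map (algebraMap R A)).mulVecLin
      (Fintype.linearCombination A fun j => (1 : A) ⊗ₜ[R] b j) := by
  have h := lTensor_exact A hM hb
  rw [← LinearMap.baseChange_eq_ltensor, ← LinearMap.baseChange_eq_ltensor] at h
  exact Function.Exact.of_ladder_linearEquiv_of_exact (e₃ := LinearEquiv.refl A _)
    M.map_mulVecLin_comp_piScalarRight
    (Fintype.linearCombination_one_tmul_comp_piScalarRight b) h

end BaseChange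

theorem Matrix.vecMul_map_algebraMap_eq_zero {R A ι κ : Type*} [CommRing R] [CommRing A]
    [Algebra R A] [Fintype ι] [DecidableEq ι] [Fintype κ] {M : Matrix κ ι R} {b : κ → A}
    (hM : Fintype.linearCombination R b ∘ₗ M.mulVecLin = 0) :
    b ᵥ* M.map (algebraMap R A) = 0 := by
  funext k
  have := LinearMap.congr_fun hM (Pi.single k 1)
  simpa [mulVec_single, vecMul, dotProduct, Fintype.linearCombination_apply,
    Algebra.smul_def, mul_comm] using this

section MulKernel

variable {R A : Type*} [CommRing R] [CommRing A] [Algebra R A]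

theorem Algebra.TensorProduct.lmul''_comp_linearCombination_one_tmul {κ : Type*} [Fintype κ]
    (G : κ → A) :
    (lmul'' R).toLinearMap ∘ₗ Fintype.linearCombination A (fun j => (1 : A) ⊗ₜ[R] G j) =
      Fintype.linearCombination A G := by
  ext v
  simp only [LinearMap.comp_apply, Fintype.linearCombination_apply, AlgHom.toLinearMap_apply,
    map_sum, smul_tmul', smul_eq_mul, mul_one]
  rfl

theorem Fintype.linearCombination_tmul_one_sub_one_tmul {r : ℕ} (g : Fin r → A) :
    Fintype.linearCombination A (fun i => g i ⊗ₜ[R] 1 - 1 ⊗ₜ[R] g i) =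
      -(Fintype.linearCombination A (fun j => (1 : A) ⊗ₜ[R] (Fin.cons 1 g : Fin (r + 1) → A) j) ∘ₗ
        syzygyMap g) := by
  ext i
  simp only [LinearMap.comp_apply, LinearMap.neg_apply, LinearMap.coe_single, syzygyMap_single,
    map_sub, map_smul, Fintype.linearCombination_apply_single, Fin.cons_zero, Fin.cons_succ,
    one_smul, smul_tmul', smul_eq_mul, mul_one, neg_sub]

end MulKernel

theorem presentation_of_ker_mul_general
    (R A : Type*) [CommRing R] [CommRing A] [Algebra R A]
    (r : ℕ) (g : Fin r → A)
    (Λ : Matrix (Fin (r + 1)) (Fin (r + 1)) R) (hΛ : Λ.IsSymm)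
    (hπsurj : Function.Surjective
      (Fintype.linearCombination R (Fin.cons (1 : A) g)))
    (hπker : LinearMap.ker (Fintype.linearCombination R (Fin.cons (1 : A) g)) =
      LinearMap.range Λ.mulVecLin)
    (hdet : algebraMap R A (Λ.submatrix Fin.succ Fin.succ).det ∈ nonZeroDivisors A) :
    Function.Injective ((Λ.submatrix Fin.succ Fin.succ).map (algebraMap R A)).mulVecLin ∧
      LinearMap.ker (Fintype.linearCombination A
          (fun i : Fin r => (g i ⊗ₜ[R] 1 - 1 ⊗ₜ[R] g i : A ⊗[R] A))) =
        LinearMap.range ((Λ.submatrix Fin.succ Fin.succ).map (algebraMap R A)).mulVecLin ∧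
      LinearMap.range (Fintype.linearCombination A
          (fun i : Fin r => (g i ⊗ₜ[R] 1 - 1 ⊗ₜ[R] g i : A ⊗[R] A))) =
        (RingHom.ker (Algebra.TensorProduct.lmul' R (S := A)).toRingHom).restrictScalars A := by
  have hexact : Function.Exact Λ.mulVecLin (Fintype.linearCombination R (Fin.cons (1 : A) g)) :=
    LinearMap.exact_iff.mpr hπker
  have hbase := Λ.exact_map_mulVecLin_linearCombination_one_tmul (A := A) hexact hπsurj
  have hrow : Fin.cons 1 g ᵥ* Λ.map (algebraMap R A) = 0 :=
    vecMul_map_algebraMap_eq_zero hexact.linearMap_comp_eq_zero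
  have hcol : Λ.map (algebraMap R A) *ᵥ Fin.cons 1 g = 0 := by
    rw [← vecMul_transpose, (hΛ.map _).eq, hrow]
  rw [Fintype.linearCombination_tmul_one_sub_one_tmul, LinearMap.ker_neg, LinearMap.range_neg,
    ← submatrix_map]
  refine ⟨?_, ?_, ?_⟩
  · rw [RingHom.map_det] at hdet
    exact mulVec_injective_of_det_mem_nonZeroDivisors (by rwa [submatrix_map])
  · rw [LinearMap.ker_comp, hbase.linearMap_ker_eq, comap_syzygyMap_range_mulVecLin hrow hcol]
  · rw [LinearMap.range_comp, range_syzygyMap,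
      ← Algebra.TensorProduct.lmul''_comp_linearCombination_one_tmul (R := R), LinearMap.ker_comp,
      Submodule.map_comap_eq_of_surjective (Fintype.linearCombination_one_tmul_surjective hπsurj)]
    rfl

/-- Proposition 4.1 (ring-theoretic form).  Let `R → A` be a finite homomorphism of
Noetherian local rings, with `A` generated as an `R`-module by `1, g_1, …, g_r`, and
let `0 → R^{r+1} →Λ R^{r+1} →G A → 0` be a free resolution with `Λ` symmetric and
`G = (1, g_1, …, g_r)`.  If the determinant of `Λ¹₁` (delete first row and column)
maps to a nonzerodivisor of `A`, then `Λ¹₁` base-changed to `A` is a presentation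
matrix of `ker(μ)` (`μ : A ⊗[R] A → A` the multiplication) with respect to the
generators `g_i ⊗ 1 - 1 ⊗ g_i`: the sequence `0 → A^r →Λ¹₁ A^r → ker(μ) → 0` is
exact. -/
theorem presentation_of_ker_mul
    (R A : Type*) [CommRing R] [CommRing A] [Algebra R A]
    [IsNoetherianRing R] [IsNoetherianRing A] [IsLocalRing R] [IsLocalRing A]
    [Module.Finite R A] (r : ℕ) (g : Fin r → A)
    (Λ : Matrix (Fin (r + 1)) (Fin (r + 1)) R) (hΛ : Λ.IsSymm)
    (hπsurj : Function.Surjective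
      (Fintype.linearCombination R (Fin.cons (1 : A) g)))
    (hπker : LinearMap.ker (Fintype.linearCombination R (Fin.cons (1 : A) g)) =
      LinearMap.range Λ.mulVecLin)
    (hΛinj : Function.Injective Λ.mulVecLin)
    (hdet : algebraMap R A (Λ.submatrix Fin.succ Fin.succ).det ∈ nonZeroDivisors A) :
    Function.Injective ((Λ.submatrix Fin.succ Fin.succ).map (algebraMap R A)).mulVecLin ∧
      LinearMap.ker (Fintype.linearCombination A
          (fun i : Fin r => (g i ⊗ₜ[R] 1 - 1 ⊗ₜ[R] g i : A ⊗[R] A))) =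
        LinearMap.range ((Λ.submatrix Fin.succ Fin.succ).map (algebraMap R A)).mulVecLin ∧
      LinearMap.range (Fintype.linearCombination A
          (fun i : Fin r => (g i ⊗ₜ[R] 1 - 1 ⊗ₜ[R] g i : A ⊗[R] A))) =
        (RingHom.ker (Algebra.TensorProduct.lmul' R (S := A)).toRingHom).restrictScalars A :=
  presentation_of_ker_mul_general R A r g Λ hΛ hπsurj hπker hdet
end
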